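/- arXiv:1109.6921 — 3 statements merged into one kernel-verified Lean document; each statement's English description precedes it below -/
import Mathlib

section
/- Suppose Σ(a_s) = (2/√f) ∫_{a_s}^∞ ε(a_v) a_v/√(a_v² − a_s²) da_v and define the circularized profile ⟨Σ⟩(R) = Σ(γ_s √q_s R) with constants γ_s, q_s, f > 0. Then the spherical (Abel) deprojection ⟨ε⟩(r) = −(1/π) ∫_r^∞ (d⟨Σ⟩/dR)(R)/√(R² − r²) dR satisfies ⟨ε⟩(r) = (γ_s √q_s / √f) · ε(γ_s √q_s · r). -/
/-!
With `c = γs √qs` and `G u = ε (c u)`, the substitution `v = c u` shows that `⟨Σ⟩` is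
`2c/√f` times the Abel transform `A G R = ∫_R^∞ G(u) u / √(u² - R²) du`. Written as
`∫_0^∞ G(√(R² + t²)) dt`, this transform can be differentiated under the integral sign:
`(A G)'(R) = ∫_R^∞ G'(u) R / √(u² - R²) du`. Inserting this into the deprojection integral and
exchanging the order of integration leaves the elementary kernel integral
`∫_r^u R dR / (√(R² - r²) √(u² - R²)) = π/2`, so the deprojection is
`-(1/π) (2c/√f) (π/2) ∫_r^∞ G' = (c/√f) G(r)`.
-/

open Real MeasureTheory
open Set

lemma hasDerivAt_sqrt_sq_add {a x : ℝ} (h : 0 < x ^ 2 + a) :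
    HasDerivAt (fun x => √(x ^ 2 + a)) (x / √(x ^ 2 + a)) x := by
  have hsq : HasDerivAt (fun x : ℝ => x ^ 2 + a) (2 * x) x := by
    simpa using (hasDerivAt_pow 2 x).add_const a
  refine ((hasDerivAt_sqrt h.ne').comp x hsq).congr_deriv ?_
  field_simp [(sqrt_pos.2 h).ne']

lemma integral_Ioi_comp_sqrt_sq_add_sq {R : ℝ} (hR : 0 ≤ R) (ψ : ℝ → ℝ) :
    ∫ t in Ioi 0, ψ √(R ^ 2 + t ^ 2) = ∫ u in Ioi R, u / √(u ^ 2 - R ^ 2) * ψ u := by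
  have hpos : ∀ u ∈ Ioi R, 0 < u ^ 2 - R ^ 2 := fun u hu => by nlinarith [hu.out]
  have hinv : ∀ u ∈ Ioi R, √(R ^ 2 + √(u ^ 2 - R ^ 2) ^ 2) = u := fun u hu => by
    rw [sq_sqrt (hpos u hu).le, add_sub_cancel, sqrt_sq (hR.trans hu.out.le)]
  have himage : (fun u => √(u ^ 2 - R ^ 2)) '' Ioi R = Ioi 0 := by
    refine Subset.antisymm (image_subset_iff.2 fun u hu => sqrt_pos.2 (hpos u hu)) fun t ht => ?_
    have ht : 0 < t := ht
    refine ⟨√(R ^ 2 + t ^ 2), ?_, ?_⟩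
    · exact (lt_sqrt hR).2 (by nlinarith)
    · show √(√(R ^ 2 + t ^ 2) ^ 2 - R ^ 2) = t
      rw [sq_sqrt (by positivity), add_sub_cancel_left, sqrt_sq ht.le]
  have hderiv : ∀ u ∈ Ioi R, HasDerivWithinAt (fun u => √(u ^ 2 - R ^ 2))
      (u / √(u ^ 2 - R ^ 2)) (Ioi R) u := fun u hu => by
    simpa only [sub_eq_add_neg] using
      (hasDerivAt_sqrt_sq_add (by simpa only [← sub_eq_add_neg] using hpos u hu)).hasDerivWithinAt
  have hinj : InjOn (fun u => √(u ^ 2 - R ^ 2)) (Ioi R) := fun u hu v hv huv => by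
    rw [← hinv u hu, ← hinv v hv]
    exact congrArg (fun s => √(R ^ 2 + s ^ 2)) huv
  rw [← himage, integral_image_eq_integral_abs_deriv_smul measurableSet_Ioi hderiv hinj]
  refine setIntegral_congr_fun measurableSet_Ioi fun u hu => ?_
  have hu0 : 0 < u := hR.trans_lt hu
  rw [smul_eq_mul, hinv u hu, abs_of_pos (div_pos hu0 (sqrt_pos.2 (hpos u hu)))]

lemma HasCompactSupport.exists_forall_ge_eq_zero {E : Type*} [Zero E] {f : ℝ → E}
    (hf : HasCompactSupport f) : ∃ b, ∀ y ≥ b, f y = 0 :=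
  Filter.eventually_atTop.1 <| (hasCompactSupport_iff_eventuallyEq.1 hf).filter_mono <|
    Filter.coclosedCompact_eq_cocompact (X := ℝ) ▸ atTop_le_cocompact

lemma norm_comp_sqrt_sq_add_sq_le_indicator {H : ℝ → ℝ} {b C : ℝ} (hC : ∀ y, ‖H y‖ ≤ C)
    (hb : ∀ y ≥ b, H y = 0) (x : ℝ) {t : ℝ} (ht : 0 < t) :
    ‖H √(x ^ 2 + t ^ 2)‖ ≤ (Ioc 0 b).indicator (fun _ => C) t := by
  by_cases htb : t ≤ b
  · rw [indicator_of_mem (show t ∈ Ioc 0 b from ⟨ht, htb⟩)]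
    exact hC _
  · rw [indicator_of_notMem fun h => htb h.2, hb _ ?_, norm_zero]
    exact (not_le.1 htb).le.trans ((le_sqrt' ht).2 (by nlinarith))

lemma hasDerivAt_integral_comp_sqrt_sq_add_sq {G : ℝ → ℝ} (hG : ContDiff ℝ 1 G)
    (hGs : HasCompactSupport G) (R : ℝ) :
    HasDerivAt (fun R => ∫ t in Ioi 0, G √(R ^ 2 + t ^ 2))
      (∫ t in Ioi 0, deriv G √(R ^ 2 + t ^ 2) * (R / √(R ^ 2 + t ^ 2))) R := by
  have hG' : Continuous (deriv G) := hG.continuous_deriv le_rfl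
  obtain ⟨b₁, hb₁⟩ := hGs.exists_forall_ge_eq_zero
  obtain ⟨b₂, hb₂⟩ := hGs.deriv.exists_forall_ge_eq_zero
  obtain ⟨C₁, hC₁⟩ := hGs.exists_bound_of_continuous hG.continuous
  obtain ⟨C₂, hC₂⟩ := hGs.deriv.exists_bound_of_continuous hG'
  have hbound : ∀ C : ℝ, Integrable ((Ioc 0 (max b₁ b₂)).indicator fun _ => C)
      (volume.restrict (Ioi 0)) := fun C =>
    (integrableOn_const measure_Ioc_lt_top.ne).integrable_indicator measurableSet_Ioc
      |>.integrableOn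
  have hsqrt_pos : ∀ x, ∀ t ∈ Ioi (0 : ℝ), 0 < x ^ 2 + t ^ 2 := fun x t ht => by
    have : (0 : ℝ) < t := ht; positivity
  have hG'meas := hG'.measurable
  refine (hasDerivAt_integral_of_dominated_loc_of_deriv_le (s := univ) (x₀ := R)
    (F := fun R t => G √(R ^ 2 + t ^ 2))
    (F' := fun R t => deriv G √(R ^ 2 + t ^ 2) * (R / √(R ^ 2 + t ^ 2))) Filter.univ_mem
    (Filter.Eventually.of_forall fun x => (by fun_prop : Continuous _).aestronglyMeasurable)
    ((hbound C₁).mono' (by fun_prop : Continuous _).aestronglyMeasurable ?_)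
    (by fun_prop : Measurable _).aestronglyMeasurable ?_ (hbound C₂) ?_).2
  · filter_upwards [self_mem_ae_restrict measurableSet_Ioi] with t ht
    exact norm_comp_sqrt_sq_add_sq_le_indicator hC₁
      (fun y hy => hb₁ y (le_of_max_le_left hy)) R ht
  · filter_upwards [self_mem_ae_restrict measurableSet_Ioi] with t ht x _
    have hs := sqrt_pos.2 (hsqrt_pos x t ht)
    have hratio : ‖x / √(x ^ 2 + t ^ 2)‖ ≤ 1 := by
      rw [norm_div, norm_of_nonneg hs.le, div_le_one hs]
      exact abs_le_sqrt (by nlinarith)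
    calc ‖deriv G √(x ^ 2 + t ^ 2) * (x / √(x ^ 2 + t ^ 2))‖
        ≤ ‖deriv G √(x ^ 2 + t ^ 2)‖ := by
          rw [norm_mul]
          exact mul_le_of_le_one_right (norm_nonneg _) hratio
      _ ≤ _ := norm_comp_sqrt_sq_add_sq_le_indicator hC₂
          (fun y hy => hb₂ y (le_of_max_le_right hy)) x ht
  · filter_upwards [self_mem_ae_restrict measurableSet_Ioi] with t ht x _
    exact ((hG.differentiable one_ne_zero _).hasDerivAt).comp x
      (hasDerivAt_sqrt_sq_add (hsqrt_pos x t ht))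

noncomputable def abelKernel (r u R : ℝ) : ℝ := R / (√(R ^ 2 - r ^ 2) * √(u ^ 2 - R ^ 2))

noncomputable def abelKernelPrimitive (r u R : ℝ) : ℝ :=
  arcsin ((2 * R ^ 2 - r ^ 2 - u ^ 2) / (u ^ 2 - r ^ 2)) / 2

section AbelKernel

variable {r u R : ℝ}

lemma abelKernel_nonneg (hR : 0 ≤ R) : 0 ≤ abelKernel r u R := by
  unfold abelKernel; positivity

lemma abelKernel_eq_zero_of_le (hu : 0 ≤ u) (huR : u ≤ R) : abelKernel r u R = 0 := by
  rw [abelKernel, sqrt_eq_zero_of_nonpos (x := u ^ 2 - R ^ 2) (by nlinarith), mul_zero, div_zero]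

lemma continuous_abelKernelPrimitive : Continuous (abelKernelPrimitive r u) :=
  (continuous_arcsin.comp (by fun_prop)).div_const 2

lemma hasDerivAt_abelKernelPrimitive (hr : 0 ≤ r) (hR : R ∈ Ioo r u) :
    HasDerivAt (abelKernelPrimitive r u) (abelKernel r u R) R := by
  obtain ⟨hrR, hRu⟩ := hR
  have hd : 0 < u ^ 2 - r ^ 2 := by nlinarith
  have hx1 : 0 < R ^ 2 - r ^ 2 := by nlinarith
  have hx2 : 0 < u ^ 2 - R ^ 2 := by nlinarith
  set z := (2 * R ^ 2 - r ^ 2 - u ^ 2) / (u ^ 2 - r ^ 2) with hz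
  have hz_gt : -1 < z := by rw [hz, lt_div_iff₀ hd]; nlinarith
  have hz_lt : z < 1 := by rw [hz, div_lt_iff₀ hd]; nlinarith
  have hinner : HasDerivAt (fun R : ℝ => (2 * R ^ 2 - r ^ 2 - u ^ 2) / (u ^ 2 - r ^ 2))
      (4 * R / (u ^ 2 - r ^ 2)) R := by
    refine ((((hasDerivAt_pow 2 R).const_mul 2).sub_const (r ^ 2)).sub_const (u ^ 2)).div_const
      (u ^ 2 - r ^ 2) |>.congr_deriv ?_
    ring
  refine (((hasDerivAt_arcsin hz_gt.ne' hz_lt.ne).comp R hinner).div_const 2).congr_deriv ?_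
  have hsqrt : √(1 - z ^ 2) = 2 * √(R ^ 2 - r ^ 2) * √(u ^ 2 - R ^ 2) / (u ^ 2 - r ^ 2) := by
    have hsq : 1 - z ^ 2 = (2 * √(R ^ 2 - r ^ 2) * √(u ^ 2 - R ^ 2) / (u ^ 2 - r ^ 2)) ^ 2 := by
      simp only [hz, div_pow, mul_pow, sq_sqrt hx1.le, sq_sqrt hx2.le]
      field_simp
      ring
    rw [hsq, sqrt_sq (by positivity)]
  rw [abelKernel, hsqrt]
  field_simp [(sqrt_pos.2 hx1).ne', (sqrt_pos.2 hx2).ne']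
  ring

lemma integrableOn_Ioo_abelKernel (hr : 0 ≤ r) :
    IntegrableOn (abelKernel r u) (Ioo r u) :=
  (intervalIntegral.integrableOn_deriv_of_nonneg continuous_abelKernelPrimitive.continuousOn
    (fun _ hR => hasDerivAt_abelKernelPrimitive hr hR)
    (fun _ hR => abelKernel_nonneg (hr.trans hR.1.le))).mono_set Ioo_subset_Ioc_self

lemma integral_Ioo_abelKernel (hr : 0 ≤ r) (hu : r < u) :
    ∫ R in Ioo r u, abelKernel r u R = π / 2 := by
  have hd : u ^ 2 - r ^ 2 ≠ 0 := by nlinarith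
  have hFTC := intervalIntegral.integral_eq_sub_of_hasDeriv_right_of_le hu.le
    continuous_abelKernelPrimitive.continuousOn
    (fun _ hR => (hasDerivAt_abelKernelPrimitive hr hR).hasDerivWithinAt)
    ((intervalIntegrable_iff_integrableOn_Ioo_of_le hu.le).2 (integrableOn_Ioo_abelKernel hr))
  rw [intervalIntegral.integral_of_le hu.le, integral_Ioc_eq_integral_Ioo] at hFTC
  rw [hFTC, abelKernelPrimitive, abelKernelPrimitive,
    show (2 * u ^ 2 - r ^ 2 - u ^ 2) / (u ^ 2 - r ^ 2) = 1 by field_simp; ring,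
    show (2 * r ^ 2 - r ^ 2 - u ^ 2) / (u ^ 2 - r ^ 2) = -1 by field_simp; ring,
    arcsin_neg, arcsin_one]
  ring

lemma abelKernel_eq_zero_of_mem_Ioi_sdiff_Ioo (hr : 0 ≤ r) (hu : r < u)
    (hR : R ∈ Ioi r \ Ioo r u) : abelKernel r u R = 0 :=
  abelKernel_eq_zero_of_le (hr.trans hu.le) (not_lt.1 fun hRu => hR.2 ⟨hR.1, hRu⟩)

lemma integrableOn_Ioi_abelKernel (hr : 0 ≤ r) (hu : r < u) :
    IntegrableOn (abelKernel r u) (Ioi r) :=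
  (integrableOn_Ioo_abelKernel hr).of_forall_sdiff_eq_zero measurableSet_Ioi
    fun _ hR => abelKernel_eq_zero_of_mem_Ioi_sdiff_Ioo hr hu hR

lemma integral_Ioi_abelKernel (hr : 0 ≤ r) (hu : r < u) :
    ∫ R in Ioi r, abelKernel r u R = π / 2 := by
  rw [← integral_Ioo_abelKernel hr hu]
  exact setIntegral_eq_of_subset_of_forall_sdiff_eq_zero measurableSet_Ioi Ioo_subset_Ioi_self
    fun _ hR => abelKernel_eq_zero_of_mem_Ioi_sdiff_Ioo hr hu hR

lemma integral_Ioi_integral_Ioi_mul_abelKernel (hr : 0 ≤ r) {φ : ℝ → ℝ}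
    (hφ : IntegrableOn φ (Ioi r)) :
    ∫ R in Ioi r, ∫ u in Ioi r, φ u * abelKernel r u R = π / 2 * ∫ u in Ioi r, φ u := by
  have hinner : ∀ u ∈ Ioi r, ∫ R in Ioi r, φ u * abelKernel r u R = φ u * (π / 2) :=
    fun u hu => by rw [integral_const_mul, integral_Ioi_abelKernel hr hu]
  have hinner_norm : ∀ u ∈ Ioi r, ∫ R in Ioi r, ‖φ u * abelKernel r u R‖ = ‖φ u‖ * (π / 2) := by
    intro u hu
    rw [← integral_Ioi_abelKernel hr hu, ← integral_const_mul]
    refine setIntegral_congr_fun measurableSet_Ioi fun R hR => ?_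
    rw [norm_mul, Real.norm_of_nonneg (abelKernel_nonneg (hr.trans hR.out.le))]
  have hmeas : Measurable (Function.uncurry fun R u => abelKernel r u R) := by
    unfold abelKernel; fun_prop
  have hint : Integrable (Function.uncurry fun R u => φ u * abelKernel r u R)
      ((volume.restrict (Ioi r)).prod (volume.restrict (Ioi r))) := by
    refine (integrable_prod_iff' ((hφ.aemeasurable.comp_snd.mul
      hmeas.aemeasurable).aestronglyMeasurable)).2 ⟨?_, ?_⟩
    · filter_upwards [self_mem_ae_restrict measurableSet_Ioi] with u hu
      exact (integrableOn_Ioi_abelKernel hr hu).const_mul (φ u)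
    · refine (hφ.norm.mul_const (π / 2)).congr ?_
      filter_upwards [self_mem_ae_restrict measurableSet_Ioi] with u hu
      exact (hinner_norm u hu).symm
  rw [integral_integral_swap hint, setIntegral_congr_fun measurableSet_Ioi hinner,
    integral_mul_const, mul_comm]

end AbelKernel

noncomputable def abelTransform (G : ℝ → ℝ) (R : ℝ) : ℝ :=
  ∫ u in Ioi R, G u * u / √(u ^ 2 - R ^ 2)

lemma abelTransform_comp_mul (G : ℝ → ℝ) {c : ℝ} (hc : 0 < c) (R : ℝ) :
    abelTransform G (c * R) = c * abelTransform (fun u => G (c * u)) R := by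
  rw [abelTransform, abelTransform, ← integral_comp_mul_left_Ioi' _ _ hc, smul_eq_mul]
  congr 1
  refine setIntegral_congr_fun measurableSet_Ioi fun u _ => ?_
  rw [show (c * u) ^ 2 - (c * R) ^ 2 = c ^ 2 * (u ^ 2 - R ^ 2) by ring, sqrt_mul (sq_nonneg c),
    sqrt_sq hc.le, mul_left_comm, mul_div_mul_left _ _ hc.ne']

lemma abelTransform_eq_integral_comp_sqrt_sq_add_sq (G : ℝ → ℝ) {R : ℝ} (hR : 0 ≤ R) :
    abelTransform G R = ∫ t in Ioi 0, G √(R ^ 2 + t ^ 2) := by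
  rw [integral_Ioi_comp_sqrt_sq_add_sq hR]
  exact setIntegral_congr_fun measurableSet_Ioi fun u _ => by ring

lemma hasDerivAt_abelTransform {G : ℝ → ℝ} (hG : ContDiff ℝ 1 G) (hGs : HasCompactSupport G)
    {R : ℝ} (hR : 0 < R) :
    HasDerivAt (abelTransform G) (∫ u in Ioi R, deriv G u * R / √(u ^ 2 - R ^ 2)) R := by
  have hloc : (fun R => ∫ t in Ioi 0, G √(R ^ 2 + t ^ 2)) =ᶠ[nhds R] abelTransform G :=
    Filter.eventuallyEq_of_mem (Ioi_mem_nhds hR) fun R' hR' =>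
      (abelTransform_eq_integral_comp_sqrt_sq_add_sq G (le_of_lt hR')).symm
  refine ((hasDerivAt_integral_comp_sqrt_sq_add_sq hG hGs R).congr_of_eventuallyEq
    hloc.symm).congr_deriv ?_
  rw [integral_Ioi_comp_sqrt_sq_add_sq hR.le (fun u => deriv G u * (R / u))]
  refine setIntegral_congr_fun measurableSet_Ioi fun u hu => ?_
  have hu0 : u ≠ 0 := (hR.trans hu.out).ne'
  field_simp

theorem integral_deriv_abelTransform_div_sqrt {G : ℝ → ℝ} (hG : ContDiff ℝ 1 G)
    (hGs : HasCompactSupport G) {r : ℝ} (hr : 0 < r) :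
    ∫ R in Ioi r, deriv (abelTransform G) R / √(R ^ 2 - r ^ 2) = -(π / 2) * G r := by
  have hkernel : ∀ R ∈ Ioi r, deriv (abelTransform G) R / √(R ^ 2 - r ^ 2)
      = ∫ u in Ioi r, deriv G u * abelKernel r u R := by
    intro R hR
    have hvanish : ∀ u ∈ Ioi r \ Ioi R, deriv G u * abelKernel r u R = 0 := fun u hu => by
      rw [abelKernel_eq_zero_of_le (hr.trans hu.1).le (not_lt.1 hu.2), mul_zero]
    rw [(hasDerivAt_abelTransform hG hGs (hr.trans hR)).deriv, ← integral_div,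
      setIntegral_eq_of_subset_of_forall_sdiff_eq_zero measurableSet_Ioi
        (Ioi_subset_Ioi hR.out.le) hvanish]
    refine setIntegral_congr_fun measurableSet_Ioi fun u _ => ?_
    rw [abelKernel]
    ring
  have hG'int : IntegrableOn (deriv G) (Ioi r) :=
    ((hG.continuous_deriv le_rfl).integrable_of_hasCompactSupport hGs.deriv).integrableOn
  rw [setIntegral_congr_fun measurableSet_Ioi hkernel,
    integral_Ioi_integral_Ioi_mul_abelKernel hr.le hG'int, hGs.integral_Ioi_deriv_eq hG r]
  ring

theorem stmt8_general (f γs qs : ℝ) (hf : 0 < f) (hγ : 0 < γs) (hqs : 0 < qs)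
    (ε : ℝ → ℝ) (hε : ContDiff ℝ 1 ε) (hsupp : HasCompactSupport ε)
    (Sig : ℝ → ℝ)
    (hSig : ∀ a : ℝ, Sig a = (2 / Real.sqrt f) *
      ∫ v in Set.Ioi a, ε v * v / Real.sqrt (v ^ 2 - a ^ 2))
    (Sigavg : ℝ → ℝ) (hSigavg : ∀ R : ℝ, Sigavg R = Sig (γs * Real.sqrt qs * R))
    (εavg : ℝ → ℝ)
    (havg : ∀ r : ℝ, εavg r = -(1 / Real.pi) *
      ∫ R in Set.Ioi r, (deriv Sigavg R) / Real.sqrt (R ^ 2 - r ^ 2)) :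
    ∀ r : ℝ, 0 < r →
      εavg r = (γs * Real.sqrt qs / Real.sqrt f) * ε (γs * Real.sqrt qs * r) := by
  intro r hr
  set c := γs * √qs
  have hc : 0 < c := mul_pos hγ (sqrt_pos.2 hqs)
  have hSigavg_eq : Sigavg = fun R => 2 * c / √f * abelTransform (fun u => ε (c * u)) R := by
    funext R
    rw [hSigavg, hSig, ← abelTransform, abelTransform_comp_mul ε hc]
    ring
  have hG : ContDiff ℝ 1 fun u => ε (c * u) := hε.comp (contDiff_const.mul contDiff_id)
  have hGs : HasCompactSupport fun u => ε (c * u) := by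
    simpa only [smul_eq_mul] using hsupp.comp_smul hc.ne'
  simp_rw [havg, hSigavg_eq, deriv_const_mul_field', mul_div_assoc]
  rw [integral_const_mul, integral_deriv_abelTransform_div_sqrt hG hGs hr]
  field_simp [(sqrt_pos.2 hf).ne', pi_ne_zero]

/-- Theorem 4 of the paper: the deprojected spherical average of an ellipsoidal
distribution ε(a_v) equals the geometric factor γ_s √q_s/√f times ε evaluated
at a_v = γ_s √q_s r. Here Σ is the elliptical projection of ε, ⟨Σ⟩ its
effective circular average, and ⟨ε⟩ its spherical (Abel) deprojection. -/
theorem stmt8 (f γs qs : ℝ) (hf : 0 < f) (hγ : 0 < γs) (hqs : 0 < qs)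
    (ε : ℝ → ℝ) (hε : ContDiff ℝ 1 ε) (hsupp : HasCompactSupport ε)
    (hpos : Function.support ε ⊆ Set.Ioi (0:ℝ))
    (Sig : ℝ → ℝ)
    (hSig : ∀ a : ℝ, Sig a = (2 / Real.sqrt f) *
      ∫ v in Set.Ioi a, ε v * v / Real.sqrt (v ^ 2 - a ^ 2))
    (Sigavg : ℝ → ℝ) (hSigavg : ∀ R : ℝ, Sigavg R = Sig (γs * Real.sqrt qs * R))
    (εavg : ℝ → ℝ)
    (havg : ∀ r : ℝ, εavg r = -(1 / Real.pi) *
      ∫ R in Set.Ioi r, (deriv Sigavg R) / Real.sqrt (R ^ 2 - r ^ 2)) :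
    ∀ r : ℝ, 0 < r →
      εavg r = (γs * Real.sqrt qs / Real.sqrt f) * ε (γs * Real.sqrt qs * r) :=
  stmt8_general f γs qs hf hγ hqs ε hε hsupp Sig hSig Sigavg hSigavg εavg havg
end

section
/- Suppose the spherically-deprojected density and pressure satisfy ⟨ρ⟩(r) = √k ρ(c r) and ⟨P⟩(r) = √k P(c r) for constants k, c > 0, and the true ellipsoidal system obeys P'(a) = −ρ(a) Φ'(a) with enclosed mass M(a) = η a² Φ'(a). Then the spherically-inferred hydrostatic mass ⟨M⟩(r) := −(r²/⟨ρ⟩(r)) d⟨P⟩/dr satisfies ⟨M⟩(r) = M(c r)/(c η), i.e., ⟨M(<r)⟩ = (γ_s q_s^{1/2} η)^{-1} M(<a_v) with a_v = γ_s √q_s r. -/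
/-- Theorem 7 of the paper: the spherically-inferred hydrostatic mass
⟨M⟩(r) = −(r²/⟨ρ⟩(r)) d⟨P⟩/dr of an ellipsoidal-potential cluster satisfies
⟨M⟩(r) = M(c r)/(c η), with ⟨ρ⟩(r) = √k ρ(c r), ⟨P⟩(r) = √k P(c r),
c = γ_s √q_s, for any temperature profile (units G = 1). -/
theorem stmt12 (k c η : ℝ) (hk : 0 < k) (hc : 0 < c) (hη : 0 < η)
    (ρ P Φ' P' : ℝ → ℝ)
    (hρpos : ∀ a : ℝ, 0 < a → 0 < ρ a)
    (hP : ∀ a : ℝ, 0 < a → HasDerivAt P (P' a) a)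
    (hhe : ∀ a : ℝ, 0 < a → P' a = -(ρ a * Φ' a))
    (M : ℝ → ℝ) (hM : ∀ a : ℝ, M a = η * a ^ 2 * Φ' a)
    (ρavg Pavg : ℝ → ℝ)
    (hρavg : ∀ r : ℝ, ρavg r = Real.sqrt k * ρ (c * r))
    (hPavg : ∀ r : ℝ, Pavg r = Real.sqrt k * P (c * r)) :
    ∀ r : ℝ, 0 < r →
      -(r ^ 2 / ρavg r) * deriv Pavg r = M (c * r) / (c * η) := by
  intro r hr
  have hcr : 0 < c * r := mul_pos hc hr
  have hPavg' : deriv Pavg r = Real.sqrt k * (c * P' (c * r)) := by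
    rw [funext hPavg, deriv_const_mul_field, deriv_comp_mul_left,
      (hP _ hcr).deriv, smul_eq_mul]
  have hρ : ρ (c * r) ≠ 0 := (hρpos _ hcr).ne'
  have hsqrtk : Real.sqrt k ≠ 0 := (Real.sqrt_pos.mpr hk).ne'
  rw [hPavg', hρavg, hhe _ hcr, hM]
  -- otherwise `field_simp` reorders `c * r` inside `ρ` and no longer sees `hρ`
  generalize ρ (c * r) = ρcr at hρ ⊢
  field_simp
end

section
/- Let Φ(a) = K ln a for a constant K > 0 (scale-free logarithmic potential on ellipsoids a_v), and let a_v(r,θ,φ) = r·g(θ,φ) with g(θ,φ) = √(sin²θcos²φ + sin²θsin²φ/p² + cos²θ/q²). Then: (i) a_v Φ'(a_v) = K identically, so the true spherically averaged mass ⟨M⟩^{true}(r) = (r/4π) ∫_{S²} a_v Φ'(a_v) dΩ equals K r; and (ii) the spherically-deprojected hydrostatic mass ⟨M⟩^{d+}(r) = (γ_s q_s^{1/2} η)^{-1} M(c r), with M(a) = η a Φ'(a) · a = η K a and c = γ_s √q_s, also equals K r. Hence ⟨M⟩^{d+}(r) = ⟨M⟩^{true}(r) for all r: spherical averaging introduces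 zero mass bias for the scale-free logarithmic ellipsoidal potential. -/
open Real intervalIntegral

/-- Theorem 11 of the paper (zero mass bias for the scale-free logarithmic
ellipsoidal potential Φ = K ln a_v, units G = 1): both the true spherically
averaged mass ⟨M⟩^{true}(r) = (r/4π)∮ a_v Φ'(a_v) dΩ and the
spherically-deprojected hydrostatic mass ⟨M⟩^{d+}(r) = (γ_s √q_s η)⁻¹ M(c r),
with M(a) = η a² Φ'(a) and c = γ_s √q_s, equal K r; hence they are equal,
independent of shape, orientation, and temperature profile. -/
theorem stmt16 (K p q γs qs η : ℝ) (hK : 0 < K)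
    (hp : 0 < p) (hp1 : p ≤ 1) (hq : 0 < q) (hq1 : q ≤ 1)
    (hγ : 0 < γs) (hqs : 0 < qs) (hη : 0 < η)
    (g : ℝ → ℝ → ℝ)
    (hg : ∀ θ φ : ℝ, g θ φ = Real.sqrt (Real.sin θ ^ 2 * Real.cos φ ^ 2 +
      Real.sin θ ^ 2 * Real.sin φ ^ 2 / p ^ 2 + Real.cos θ ^ 2 / q ^ 2))
    (Φ' : ℝ → ℝ) (hΦ' : ∀ a : ℝ, 0 < a → Φ' a = K / a)
    (M : ℝ → ℝ) (hM : ∀ a : ℝ, M a = η * a ^ 2 * Φ' a)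
    (Mtrue Mdep : ℝ → ℝ)
    (hMtrue : ∀ r : ℝ, Mtrue r = (r / (4 * π)) *
      ∫ θ in (0:ℝ)..π, (∫ φ in (0:ℝ)..(2 * π),
        (r * g θ φ) * Φ' (r * g θ φ)) * Real.sin θ)
    (hMdep : ∀ r : ℝ, Mdep r =
      (γs * Real.sqrt qs * η)⁻¹ * M (γs * Real.sqrt qs * r)) :
    ∀ r : ℝ, 0 < r →
      Mtrue r = K * r ∧ Mdep r = K * r ∧ Mdep r = Mtrue r := by
  intro r hr
  have hgpos : ∀ θ φ : ℝ, 1 ≤ g θ φ := by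
    intro θ φ
    rw [hg]
    have h1 : (1:ℝ) ≤ Real.sin θ ^ 2 * Real.cos φ ^ 2 +
        Real.sin θ ^ 2 * Real.sin φ ^ 2 / p ^ 2 + Real.cos θ ^ 2 / q ^ 2 := by
      have hps : p ^ 2 ≤ 1 := by nlinarith
      have hqs2 : q ^ 2 ≤ 1 := by nlinarith
      have hpp : 0 < p ^ 2 := by positivity
      have hqq : 0 < q ^ 2 := by positivity
      have h2 : Real.sin θ ^ 2 * Real.sin φ ^ 2 ≤ Real.sin θ ^ 2 * Real.sin φ ^ 2 / p ^ 2 := by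
        rw [le_div_iff₀ hpp]; nlinarith [sq_nonneg (Real.sin θ * Real.sin φ)]
      have h3 : Real.cos θ ^ 2 ≤ Real.cos θ ^ 2 / q ^ 2 := by
        rw [le_div_iff₀ hqq]; nlinarith [sq_nonneg (Real.cos θ)]
      nlinarith [Real.sin_sq_add_cos_sq θ, Real.sin_sq_add_cos_sq φ,
        sq_nonneg (Real.sin θ)]
    calc (1:ℝ) = Real.sqrt 1 := by simp
    _ ≤ _ := Real.sqrt_le_sqrt h1
  have hK' : ∀ θ φ : ℝ, (r * g θ φ) * Φ' (r * g θ φ) = K := by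
    intro θ φ
    have hpos : 0 < r * g θ φ := by
      have := hgpos θ φ; nlinarith
    rw [hΦ' _ hpos]
    field_simp
    exact div_self (by have := hgpos θ φ; linarith)
  have hMt : Mtrue r = K * r := by
    rw [hMtrue]
    have : (∫ θ in (0:ℝ)..π, (∫ φ in (0:ℝ)..(2 * π),
        (r * g θ φ) * Φ' (r * g θ φ)) * Real.sin θ)
        = ∫ θ in (0:ℝ)..π, (2 * π * K) * Real.sin θ := by
      apply intervalIntegral.integral_congr
      intro θ _
      simp only
      congr 1
      rw [intervalIntegral.integral_congr (g := fun _ => K)]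
      · simp [mul_comm]
      · intro φ _; exact hK' θ φ
    rw [this]
    rw [intervalIntegral.integral_const_mul, integral_sin]
    simp only [Real.cos_zero, Real.cos_pi]
    have hπ : π ≠ 0 := Real.pi_ne_zero
    field_simp
    ring
  have hc : 0 < γs * Real.sqrt qs := by positivity
  have hMd : Mdep r = K * r := by
    rw [hMdep, hM, hΦ' _ (by positivity)]
    field_simp
  exact ⟨hMt, hMd, hMd.trans hMt.symm⟩
end
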